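/- arXiv:2106.10062 — 2 statements merged into one kernel-verified Lean document; each statement's English description precedes it below -/
import Mathlib

section
/- Let d ≥ 1, J ≥ 1, a ∈ ℝ^d, b ∈ ℝ, and let G(u) = ⟨a, u⟩ − b and G̃(u) = max(0, G(u)). For an ensemble u⁽¹⁾, …, u⁽ᴶ⁾ ∈ ℝ^d with mean ū = (1/J)∑ₖ u⁽ᵏ⁾ and with Ḡ̃ = (1/J)∑ₖ G̃(u⁽ᵏ⁾), define for each index j the drift vector V_j = (1/J) ∑ₖ (G̃(u⁽ᵏ⁾) − Ḡ̃)·(−G̃(u⁽ʲ⁾)) · (u⁽ᵏ⁾ − ū), and let F = {k : G(u⁽ᵏ⁾) < 0} be the index set of failure particles. If G(u⁽ʲ⁾) ≥ 0 (i.e., u⁽ʲ⁾ is a safe particle), then V_j = −G(u⁽ʲ⁾)·[(1/J) ∑ₖ (G(u⁽ᵏ⁾) − G(ū)) · (u⁽ᵏ⁾ − ū)] + (G(u⁽ʲ⁾)/J) ∑_{k ∈ F} G(u⁽ᵏ⁾) · (u⁽ᵏ⁾ − ū). -/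
open scoped InnerProductSpace BigOperators

/-- For the affine LSF `G(u) = ⟪a, u⟫ - b` and auxiliary LSF `G̃ = max 0 G`,
the drift of a safe particle (one with `G (u j) ≥ 0`) decomposes into a gradient-flow
term and a term involving only the failure particles. -/
theorem enkf_safe_particle_drift
    (d J : ℕ) (hd : 1 ≤ d) (hJ : 1 ≤ J)
    (a : EuclideanSpace ℝ (Fin d)) (b : ℝ)
    (G : EuclideanSpace ℝ (Fin d) → ℝ) (hG : ∀ u, G u = ⟪a, u⟫_ℝ - b)
    (Gt : EuclideanSpace ℝ (Fin d) → ℝ) (hGt : ∀ u, Gt u = max 0 (G u))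
    (u : Fin J → EuclideanSpace ℝ (Fin d))
    (ubar : EuclideanSpace ℝ (Fin d)) (hubar : ubar = (J : ℝ)⁻¹ • ∑ k, u k)
    (Gbar : ℝ) (hGbar : Gbar = (J : ℝ)⁻¹ * ∑ k, Gt (u k))
    (V : Fin J → EuclideanSpace ℝ (Fin d))
    (hV : ∀ j, V j = (J : ℝ)⁻¹ •
      ∑ k, ((Gt (u k) - Gbar) * (-(Gt (u j)))) • (u k - ubar))
    (F : Finset (Fin J)) (hF : F = Finset.univ.filter fun k => G (u k) < 0)
    (j : Fin J) (hj : 0 ≤ G (u j)) :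
    V j = (-(G (u j))) • ((J : ℝ)⁻¹ • ∑ k, (G (u k) - G ubar) • (u k - ubar))
      + (G (u j) / (J : ℝ)) • ∑ k ∈ F, (G (u k)) • (u k - ubar) := by
  have hJ0 : (J : ℝ) ≠ 0 := Nat.cast_ne_zero.mpr (by omega)
  set c := G (u j) with hc
  have hGtj : Gt (u j) = c := by rw [hGt]; exact max_eq_right hj
  have hsumw : ∑ k, (u k - ubar) = (0 : EuclideanSpace ℝ (Fin d)) := by
    rw [Finset.sum_sub_distrib, Finset.sum_const, Finset.card_univ, Fintype.card_fin,
      hubar, ← Nat.cast_smul_eq_nsmul ℝ, smul_smul, mul_inv_cancel₀ hJ0, one_smul, sub_self]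
  have hzero : ∀ r : ℝ, (∑ k, r • (u k - ubar)) = (0 : EuclideanSpace ℝ (Fin d)) := by
    intro r; rw [← Finset.smul_sum, hsumw, smul_zero]
  rw [hV, hGtj]
  -- reduce LHS
  have hL : ∑ k, ((Gt (u k) - Gbar) * (-c)) • (u k - ubar)
      = ∑ k, (-(c * Gt (u k))) • (u k - ubar) := by
    have h1 : ∀ k : Fin J, ((Gt (u k) - Gbar) * (-c)) • (u k - ubar)
        = (-(c * Gt (u k))) • (u k - ubar) + (Gbar * c) • (u k - ubar) := by
      intro k
      rw [← add_smul, show (-(c * Gt (u k)) + Gbar * c) = ((Gt (u k) - Gbar) * (-c)) by ring]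
    simp_rw [h1, Finset.sum_add_distrib, hzero, add_zero]
  rw [hL]
  -- reduce RHS
  rw [smul_comm (-c) ((J : ℝ)⁻¹), div_eq_inv_mul, mul_smul, ← smul_add]
  congr 1
  rw [Finset.smul_sum, Finset.smul_sum]
  have h2 : ∀ k : Fin J, (-c) • ((G (u k) - G ubar) • (u k - ubar))
      = (-(c * G (u k))) • (u k - ubar) + (c * G ubar) • (u k - ubar) := by
    intro k
    rw [smul_smul, ← add_smul,
      show (-(c * G (u k)) + c * G ubar) = (-c) * (G (u k) - G ubar) by ring]
  simp_rw [h2, Finset.sum_add_distrib, hzero, add_zero]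
  have h3 : ∑ k ∈ F, c • (G (u k)) • (u k - ubar)
      = ∑ k, (if G (u k) < 0 then (c * G (u k)) else 0) • (u k - ubar) := by
    rw [hF, Finset.sum_filter]
    refine Finset.sum_congr rfl fun k _ => ?_
    by_cases h : G (u k) < 0
    · simp [h, smul_smul]
    · simp [h]
  rw [h3, ← Finset.sum_add_distrib]
  refine Finset.sum_congr rfl fun k _ => ?_
  rw [← add_smul]
  congr 1
  by_cases h : G (u k) < 0
  · rw [hGt, max_eq_left h.le]; simp [h]
  · rw [hGt, max_eq_right (not_lt.mp h)]; simp [h]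
end

section
/- Let U be a square-integrable real random variable on a probability space, let b < 0, and set P_f := P(U < b), assumed to satisfy 0 < P_f < 1. Assume the conditional distribution of U given the event {U < b} is the standard Gaussian distribution conditioned on (−∞, b), and assume the conditional variance Var[U | U ≥ b] is strictly positive. Let m_S := E[U | U ≥ b] and u_opt := −φ(b)/Φ(b). Then Var[U] > (1 − P_f)·m_S² + P_f·(1 + b·u_opt) − ((1 − P_f)·m_S + P_f·u_opt)². -/
open MeasureTheory ProbabilityTheory

/-- The standard normal probability density function `φ`. -/
noncomputable def stdNormalPdf (x : ℝ) : ℝ :=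
  (Real.sqrt (2 * Real.pi))⁻¹ * Real.exp (-x ^ 2 / 2)

/-- The standard normal cumulative distribution function `Φ`. -/
noncomputable def stdNormalCdf (b : ℝ) : ℝ :=
  ∫ x in Set.Iio b, stdNormalPdf x

/-!
Split `Ω` into the failure event `F = {U < b}` and its complement. The first two moments of `U`
are then mixtures, with weights `P_f` and `1 - P_f`, of the conditional moments. On `F` these are
the moments `u_opt` and `1 + b u_opt` of the truncated Gaussian, obtained by integrating
`φ' = -x φ` and `(x φ)' = φ - x² φ` over `(-∞, b)`; on `Fᶜ` the second moment is
`Var[U | Fᶜ] + m_S²`. Hence `Var U` is the right-hand side plus `(1 - P_f) Var[U | Fᶜ] > 0`.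
-/

open Set

section ConditionalIntegral

variable {Ω E : Type*} [MeasurableSpace Ω] {μ : Measure Ω} [NormedAddCommGroup E]

theorem setIntegral_eq_measureReal_smul_integral_cond [IsFiniteMeasure μ] [NormedSpace ℝ E]
    (s : Set Ω) (f : Ω → E) :
    ∫ x in s, f x ∂μ = μ.real s • ∫ x, f x ∂μ[|s] := by
  by_cases hs : μ s = 0
  · simp [Measure.restrict_eq_zero.mpr hs, measureReal_def, hs]
  · rw [ProbabilityTheory.cond, integral_smul_measure, smul_smul, measureReal_def,
      ENNReal.toReal_inv, mul_inv_cancel₀ (ENNReal.toReal_ne_zero.mpr ⟨hs, measure_ne_top μ s⟩),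
      one_smul]

theorem integral_eq_cond_add_cond_compl [IsFiniteMeasure μ] [NormedSpace ℝ E] {s : Set Ω}
    (hs : MeasurableSet s) {f : Ω → E} (hf : Integrable f μ) :
    ∫ x, f x ∂μ = μ.real s • ∫ x, f x ∂μ[|s] + μ.real sᶜ • ∫ x, f x ∂μ[|sᶜ] := by
  rw [← setIntegral_eq_measureReal_smul_integral_cond,
    ← setIntegral_eq_measureReal_smul_integral_cond, integral_add_compl hs hf]

theorem MeasureTheory.MemLp.cond {f : Ω → E} {p : ENNReal} (hf : MemLp f p μ) (s : Set Ω) :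
    MemLp f p μ[|s] := by
  by_cases hs : μ s = 0
  · simp [cond_eq_zero_of_meas_eq_zero hs]
  · exact (hf.restrict s).smul_measure (ENNReal.inv_ne_top.mpr hs)

end ConditionalIntegral

theorem integral_Iic_eq_of_hasDerivAt_of_integrableOn {f f' : ℝ → ℝ} {a : ℝ}
    (hderiv : ∀ x ∈ Iic a, HasDerivAt f (f' x) x) (f'int : IntegrableOn f' (Iic a))
    (fint : IntegrableOn f (Iic a)) :
    ∫ x in Iic a, f' x = f a := by
  simpa using integral_Iic_of_hasDerivAt_of_tendsto' hderiv f'int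
    (tendsto_zero_of_hasDerivAt_of_integrableOn_Iic hderiv f'int fint)

theorem stdNormalPdf_nonneg (x : ℝ) : 0 ≤ stdNormalPdf x := by
  unfold stdNormalPdf
  positivity

theorem gaussianPDFReal_zero_one : gaussianPDFReal 0 1 = stdNormalPdf := by
  ext x
  simp [gaussianPDFReal, stdNormalPdf]

theorem measurable_stdNormalPdf : Measurable stdNormalPdf :=
  gaussianPDFReal_zero_one ▸ measurable_gaussianPDFReal 0 1

theorem hasDerivAt_stdNormalPdf (x : ℝ) : HasDerivAt stdNormalPdf (-x * stdNormalPdf x) x := by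
  have hφ : stdNormalPdf = fun y ↦ (Real.sqrt (2 * Real.pi))⁻¹ * Real.exp (-1 / 2 * y ^ 2) := by
    ext y
    simp only [stdNormalPdf]
    ring_nf
  rw [hφ]
  refine ((((hasDerivAt_pow 2 x).const_mul (-1 / 2 : ℝ)).exp).const_mul
    (Real.sqrt (2 * Real.pi))⁻¹).congr_deriv ?_
  push_cast
  ring

theorem gaussianReal_zero_one_eq_withDensity :
    gaussianReal 0 1 = volume.withDensity fun x ↦ ENNReal.ofReal (stdNormalPdf x) := by
  rw [gaussianReal_of_var_ne_zero 0 one_ne_zero, ← gaussianPDFReal_zero_one]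
  rfl

theorem integrable_pow_mul_stdNormalPdf (n : ℕ) :
    Integrable fun x ↦ x ^ n * stdNormalPdf x := by
  have h : Integrable (fun x : ℝ ↦ x ^ n) (gaussianReal 0 1) :=
    (memLp_id_gaussianReal n).integrable_norm_pow'.mono' (by fun_prop)
      (ae_of_all _ fun x ↦ by simp)
  rw [gaussianReal_zero_one_eq_withDensity, integrable_withDensity_iff_integrable_smul'
    measurable_stdNormalPdf.ennreal_ofReal
    (ae_of_all _ fun _ ↦ ENNReal.ofReal_lt_top)] at h
  simpa [ENNReal.toReal_ofReal (stdNormalPdf_nonneg _), mul_comm] using h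

theorem integrable_stdNormalPdf : Integrable stdNormalPdf := by
  simpa using integrable_pow_mul_stdNormalPdf 0

theorem integral_Iio_mul_stdNormalPdf (b : ℝ) :
    ∫ x in Iio b, x * stdNormalPdf x = -stdNormalPdf b := by
  have h := integral_Iic_eq_of_hasDerivAt_of_integrableOn (a := b)
    (fun x _ ↦ hasDerivAt_stdNormalPdf x)
    (by simpa using (integrable_pow_mul_stdNormalPdf 1).fun_neg.integrableOn)
    integrable_stdNormalPdf.integrableOn
  rw [setIntegral_congr_set Iio_ae_eq_Iic]
  simp only [neg_mul, integral_neg] at h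
  linarith

theorem integral_Iio_sq_mul_stdNormalPdf (b : ℝ) :
    ∫ x in Iio b, x ^ 2 * stdNormalPdf x = stdNormalCdf b - b * stdNormalPdf b := by
  have hderiv (x : ℝ) : HasDerivAt (fun y ↦ y * stdNormalPdf y)
      (stdNormalPdf x - x ^ 2 * stdNormalPdf x) x :=
    ((hasDerivAt_id x).mul (hasDerivAt_stdNormalPdf x)).congr_deriv <| by
      simp only [one_mul, id_eq, neg_mul, mul_neg]
      ring
  have hsq := (integrable_pow_mul_stdNormalPdf 2).integrableOn (s := Iic b)
  have h := integral_Iic_eq_of_hasDerivAt_of_integrableOn (fun x _ ↦ hderiv x)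
    (integrable_stdNormalPdf.integrableOn.fun_sub hsq)
    (by simpa using (integrable_pow_mul_stdNormalPdf 1).integrableOn)
  rw [integral_sub integrable_stdNormalPdf.integrableOn hsq] at h
  rw [setIntegral_congr_set Iio_ae_eq_Iic, stdNormalCdf, setIntegral_congr_set Iio_ae_eq_Iic]
  linarith

theorem gaussianReal_real_Iio (b : ℝ) : (gaussianReal 0 1).real (Iio b) = stdNormalCdf b := by
  rw [measureReal_def, gaussianReal_apply_eq_integral 0 one_ne_zero, gaussianPDFReal_zero_one,
    ENNReal.toReal_ofReal (setIntegral_nonneg measurableSet_Iio fun x _ ↦ stdNormalPdf_nonneg x)]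
  rfl

theorem stdNormalCdf_pos (b : ℝ) : 0 < stdNormalCdf b := by
  rw [← gaussianReal_real_Iio]
  refine ENNReal.toReal_pos (fun h ↦ ?_) (measure_ne_top _ _)
  simpa using gaussianReal_absolutelyContinuous' 0 one_ne_zero h

theorem stdNormalCdf_mul_integral_cond_Iio (b : ℝ) (f : ℝ → ℝ) :
    stdNormalCdf b * ∫ x, f x ∂(gaussianReal 0 1)[|Iio b] =
      ∫ x in Iio b, f x * stdNormalPdf x := by
  rw [← gaussianReal_real_Iio, ← smul_eq_mul, ← setIntegral_eq_measureReal_smul_integral_cond,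
    gaussianReal_zero_one_eq_withDensity, setIntegral_withDensity_eq_setIntegral_toReal_smul'
    _ measurable_stdNormalPdf.ennreal_ofReal
    (ae_of_all _ fun _ ↦ ENNReal.ofReal_lt_top)]
  simp [ENNReal.toReal_ofReal (stdNormalPdf_nonneg _), mul_comm]

theorem integral_cond_Iio_gaussianReal_id (b : ℝ) :
    ∫ x, x ∂(gaussianReal 0 1)[|Iio b] = -stdNormalPdf b / stdNormalCdf b := by
  rw [eq_div_iff (stdNormalCdf_pos b).ne', mul_comm, stdNormalCdf_mul_integral_cond_Iio,
    integral_Iio_mul_stdNormalPdf]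

theorem integral_cond_Iio_gaussianReal_sq (b : ℝ) :
    ∫ x, x ^ 2 ∂(gaussianReal 0 1)[|Iio b] = 1 + b * (-stdNormalPdf b / stdNormalCdf b) := by
  have h := stdNormalCdf_mul_integral_cond_Iio b (· ^ 2)
  rw [integral_Iio_sq_mul_stdNormalPdf] at h
  have := (stdNormalCdf_pos b).ne'
  field_simp
  linarith

theorem enkf_variance_lower_bound_general
    {Ω : Type} [MeasurableSpace Ω] (P : Measure Ω) [IsProbabilityMeasure P]
    (U : Ω → ℝ) (hUmeas : Measurable U) (hU2 : MeasureTheory.MemLp U 2 P)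
    (b : ℝ)
    (Pf : ℝ) (hPf : Pf = (P {ω | U ω < b}).toReal) (hPf1 : Pf < 1)
    (hcond : Measure.map U (P[|{ω | U ω < b}]) = (gaussianReal 0 1)[|Set.Iio b])
    (hvar : 0 < variance U (P[|{ω | b ≤ U ω}]))
    (mS : ℝ) (hmS : mS = ∫ ω, U ω ∂(P[|{ω | b ≤ U ω}]))
    (uopt : ℝ) (huopt : uopt = -(stdNormalPdf b) / stdNormalCdf b) :
    (1 - Pf) * mS ^ 2 + Pf * (1 + b * uopt) - ((1 - Pf) * mS + Pf * uopt) ^ 2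
      < variance U P := by
  set F := {ω | U ω < b}
  have hF : MeasurableSet F := hUmeas measurableSet_Iio
  have hFc : {ω | b ≤ U ω} = Fᶜ := by ext; simp [F]
  rw [hFc] at hvar hmS
  have hPfc : P.real Fᶜ = 1 - Pf := by rw [probReal_compl_eq_one_sub hF, hPf, measureReal_def]
  have : IsProbabilityMeasure P[|Fᶜ] := cond_isProbabilityMeasure fun h ↦ by
    simp only [measureReal_def, h, ENNReal.toReal_zero] at hPfc
    linarith
  have hmean_F : ∫ ω, U ω ∂P[|F] = uopt := by
    rw [← integral_map hUmeas.aemeasurable (f := fun x ↦ x) (by fun_prop), hcond,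
      integral_cond_Iio_gaussianReal_id, huopt]
  have hsq_F : ∫ ω, U ω ^ 2 ∂P[|F] = 1 + b * uopt := by
    rw [← integral_map hUmeas.aemeasurable (f := (· ^ 2)) (by fun_prop), hcond,
      integral_cond_Iio_gaussianReal_sq, huopt]
  have hsq_Fc : ∫ ω, U ω ^ 2 ∂P[|Fᶜ] = variance U P[|Fᶜ] + mS ^ 2 := by
    rw [variance_eq_sub (hU2.cond Fᶜ), hmS]
    simp
  have hmean : ∫ ω, U ω ∂P = Pf * uopt + (1 - Pf) * mS := by
    rw [integral_eq_cond_add_cond_compl hF (hU2.integrable one_le_two), hmean_F, ← hmS, hPfc,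
      measureReal_def, ← hPf, smul_eq_mul, smul_eq_mul]
  have hsq :
      ∫ ω, U ω ^ 2 ∂P = Pf * (1 + b * uopt) + (1 - Pf) * (variance U P[|Fᶜ] + mS ^ 2) := by
    rw [integral_eq_cond_add_cond_compl hF hU2.integrable_sq, hsq_F, hsq_Fc, hPfc,
      measureReal_def, ← hPf, smul_eq_mul, smul_eq_mul]
  rw [variance_eq_sub hU2]
  simp only [Pi.pow_apply, hmean, hsq]
  linarith [mul_pos (sub_pos.mpr hPf1) hvar]

/-- Lower bound on the ensemble variance: if the conditional law of `U` given
`{U < b}` is the standard Gaussian truncated to `(-∞, b)` and the safe particles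
have positive conditional variance, then
`Var[U] > (1-P_f) m_S² + P_f (1 + b u_opt) - ((1-P_f) m_S + P_f u_opt)²`. -/
theorem enkf_variance_lower_bound
    {Ω : Type} [MeasurableSpace Ω] (P : Measure Ω) [IsProbabilityMeasure P]
    (U : Ω → ℝ) (hUmeas : Measurable U) (hU2 : MeasureTheory.MemLp U 2 P)
    (b : ℝ) (hb : b < 0)
    (Pf : ℝ) (hPf : Pf = (P {ω | U ω < b}).toReal) (hPf0 : 0 < Pf) (hPf1 : Pf < 1)
    (hcond : Measure.map U (P[|{ω | U ω < b}]) = (gaussianReal 0 1)[|Set.Iio b])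
    (hvar : 0 < variance U (P[|{ω | b ≤ U ω}]))
    (mS : ℝ) (hmS : mS = ∫ ω, U ω ∂(P[|{ω | b ≤ U ω}]))
    (uopt : ℝ) (huopt : uopt = -(stdNormalPdf b) / stdNormalCdf b) :
    (1 - Pf) * mS ^ 2 + Pf * (1 + b * uopt) - ((1 - Pf) * mS + Pf * uopt) ^ 2
      < variance U P :=
  enkf_variance_lower_bound_general P U hUmeas hU2 b Pf hPf hPf1 hcond hvar mS hmS uopt huopt
end
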